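/- Let a, b, c, d be integers such that a ± c and b ± d are all even. For every (A, B) ∈ SU(2) × SU(2), the orbit of (A, B) under the S¹ action on U(2) × U(2) given by z ∗ (A, B) = (diag(z^a, 1) · A · diag(z^((a+c)/2), z^((a−c)/2))⁻¹, diag(z^b, 1) · B · diag(z^((b+d)/2), z^((b−d)/2))⁻¹) equals, as a set of pairs of matrices, the orbit of (A, B) under the S¹ action z ∗ (A, B) = (D(z^a) · A · D(z^c)⁻¹, D(z^b) · B · D(z^d)⁻¹); in particular this orbit is contained in SU(2) × SU(2). -/

import Mathlib

/-!
Write `z = w²`. At the point `z`, the diagonal factors on the two sides of `A` in the first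
action differ from `D(w^a)` and `D(w^c)⁻¹` by the scalars `w^a` and `w^(-a)`, which cancel
(this needs `(a ± c)/2` to be exact halves). Since squaring is onto `S¹`, both orbits are
the image of `S¹` under the same map, and `D(u)` lies in `SU(2)`.
-/

open Matrix

/-- `D u = diag(u, ū)` for `u` in the circle. -/
noncomputable def DMat (u : Circle) : Matrix (Fin 2) (Fin 2) ℂ :=
  Matrix.diagonal ![(u : ℂ), (starRingEnd ℂ) (u : ℂ)]

theorem Matrix.diagonal_mul_mul_diagonal_congr {n R : Type*} [Fintype n] [DecidableEq n]
    [CommSemiring R] {p q p' q' : n → R} (h : ∀ i j, p i * q j = p' i * q' j)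
    (A : Matrix n n R) : diagonal p * A * diagonal q = diagonal p' * A * diagonal q' := by
  ext i j
  simp only [diagonal_mul, mul_diagonal, mul_right_comm (p _), mul_right_comm (p' _), h]

theorem Matrix.inv_diagonal_fin_two {K : Type*} [Field K] {x y : K} (hx : x ≠ 0) (hy : y ≠ 0) :
    (diagonal ![x, y])⁻¹ = diagonal ![x⁻¹, y⁻¹] := by
  refine inv_eq_left_inv ?_
  rw [diagonal_mul_diagonal, ← diagonal_one]
  congr 1
  ext i
  fin_cases i <;> simp [hx, hy]

theorem Circle.exists_sq_eq (z : Circle) : ∃ w : Circle, w ^ 2 = z := by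
  obtain ⟨t, rfl⟩ := Circle.exp_surjective z
  exact ⟨Circle.exp (t / 2), by rw [sq, ← Circle.exp_add, add_halves]⟩

theorem DMat_eq_diagonal (u : Circle) :
    DMat u = diagonal ![(u : ℂ), ((u⁻¹ : Circle) : ℂ)] := by
  rw [DMat, Circle.coe_inv_eq_conj]

theorem Circle.inv_diagonal_fin_two (u v : Circle) :
    (diagonal ![(u : ℂ), (v : ℂ)])⁻¹ = diagonal ![((u⁻¹ : Circle) : ℂ), ((v⁻¹ : Circle) : ℂ)] := by
  rw [Matrix.inv_diagonal_fin_two u.coe_ne_zero v.coe_ne_zero, Circle.coe_inv, Circle.coe_inv]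

theorem DMat_inv (u : Circle) : (DMat u)⁻¹ = DMat u⁻¹ := by
  rw [DMat_eq_diagonal, DMat_eq_diagonal, Circle.inv_diagonal_fin_two]

theorem DMat_mem_specialUnitaryGroup (u : Circle) :
    DMat u ∈ specialUnitaryGroup (Fin 2) ℂ := by
  rw [mem_specialUnitaryGroup_iff, mem_unitaryGroup_iff, DMat, star_eq_conjTranspose,
    diagonal_conjTranspose, diagonal_mul_diagonal, det_diagonal, ← diagonal_one]
  refine ⟨congrArg diagonal ?_, by simp [Fin.prod_univ_two, Complex.mul_conj]⟩
  ext i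
  fin_cases i <;> simp [Complex.mul_conj, Complex.conj_mul', Circle.norm_coe]

theorem diagonal_conj_sq_eq_DMat_conj (a c : ℤ) (h : Even (a + c)) (A : Matrix (Fin 2) (Fin 2) ℂ)
    (w : Circle) :
    diagonal ![(((w ^ 2) ^ a : Circle) : ℂ), 1] * A *
      (diagonal ![(((w ^ 2) ^ ((a + c) / 2) : Circle) : ℂ),
        (((w ^ 2) ^ ((a - c) / 2) : Circle) : ℂ)])⁻¹ =
    DMat (w ^ a) * A * (DMat (w ^ c))⁻¹ := by
  obtain ⟨k, hk⟩ := h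
  obtain rfl : a = k + k - c := by omega
  rw [show (k + k - c + c) / 2 = k by omega, show (k + k - c - c) / 2 = k - c by omega,
    DMat_inv, DMat_eq_diagonal, DMat_eq_diagonal, Circle.inv_diagonal_fin_two,
    ← Circle.coe_one, ← zpow_zero w]
  refine diagonal_mul_mul_diagonal_congr ?_ A
  simp only [Fin.forall_fin_two, cons_val_zero, cons_val_one, ← Circle.coe_mul, ← zpow_natCast,
    ← _root_.zpow_mul, ← _root_.zpow_neg, ← _root_.zpow_add]
  refine ⟨⟨?_, ?_⟩, ?_, ?_⟩ <;> congr 2 <;> ring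

theorem DMat_mul_mul_inv_mem (u v : Circle) {A : Matrix (Fin 2) (Fin 2) ℂ}
    (hA : A ∈ specialUnitaryGroup (Fin 2) ℂ) :
    DMat u * A * (DMat v)⁻¹ ∈ specialUnitaryGroup (Fin 2) ℂ := by
  rw [DMat_inv]
  exact mul_mem (mul_mem (DMat_mem_specialUnitaryGroup u) hA) (DMat_mem_specialUnitaryGroup v⁻¹)

theorem orbits_coincide_on_SU2_general (a b c d : ℤ)
    (h1 : Even (a + c)) (h3 : Even (b + d))
    (A B : Matrix (Fin 2) (Fin 2) ℂ)
    (hA : A ∈ Matrix.specialUnitaryGroup (Fin 2) ℂ)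
    (hB : B ∈ Matrix.specialUnitaryGroup (Fin 2) ℂ) :
    ({P : Matrix (Fin 2) (Fin 2) ℂ × Matrix (Fin 2) (Fin 2) ℂ | ∃ z : Circle,
        P = (Matrix.diagonal ![((z ^ a : Circle) : ℂ), 1] * A *
              (Matrix.diagonal ![((z ^ ((a + c) / 2) : Circle) : ℂ),
                ((z ^ ((a - c) / 2) : Circle) : ℂ)])⁻¹,
             Matrix.diagonal ![((z ^ b : Circle) : ℂ), 1] * B *
              (Matrix.diagonal ![((z ^ ((b + d) / 2) : Circle) : ℂ),
                ((z ^ ((b - d) / 2) : Circle) : ℂ)])⁻¹)} =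
      {P : Matrix (Fin 2) (Fin 2) ℂ × Matrix (Fin 2) (Fin 2) ℂ | ∃ z : Circle,
        P = (DMat (z ^ a) * A * (DMat (z ^ c))⁻¹, DMat (z ^ b) * B * (DMat (z ^ d))⁻¹)}) ∧
    (∀ P : Matrix (Fin 2) (Fin 2) ℂ × Matrix (Fin 2) (Fin 2) ℂ,
      (∃ z : Circle,
        P = (Matrix.diagonal ![((z ^ a : Circle) : ℂ), 1] * A *
              (Matrix.diagonal ![((z ^ ((a + c) / 2) : Circle) : ℂ),
                ((z ^ ((a - c) / 2) : Circle) : ℂ)])⁻¹,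
             Matrix.diagonal ![((z ^ b : Circle) : ℂ), 1] * B *
              (Matrix.diagonal ![((z ^ ((b + d) / 2) : Circle) : ℂ),
                ((z ^ ((b - d) / 2) : Circle) : ℂ)])⁻¹)) →
      P.1 ∈ Matrix.specialUnitaryGroup (Fin 2) ℂ ∧
        P.2 ∈ Matrix.specialUnitaryGroup (Fin 2) ℂ) := by
  refine ⟨Set.ext fun P => ⟨?_, ?_⟩, ?_⟩
  · rintro ⟨z, rfl⟩
    obtain ⟨w, rfl⟩ := Circle.exists_sq_eq z
    exact ⟨w, by rw [diagonal_conj_sq_eq_DMat_conj a c h1, diagonal_conj_sq_eq_DMat_conj b d h3]⟩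
  · rintro ⟨w, rfl⟩
    exact ⟨w ^ 2, by rw [diagonal_conj_sq_eq_DMat_conj a c h1, diagonal_conj_sq_eq_DMat_conj b d h3]⟩
  · rintro P ⟨z, rfl⟩
    obtain ⟨w, rfl⟩ := Circle.exists_sq_eq z
    rw [diagonal_conj_sq_eq_DMat_conj a c h1, diagonal_conj_sq_eq_DMat_conj b d h3]
    exact ⟨DMat_mul_mul_inv_mem _ _ hA, DMat_mul_mul_inv_mem _ _ hB⟩

/-- Suppose `a ± c` and `b ± d` are all even.  Through any point
`(A, B) ∈ SU(2) × SU(2)`, the orbit of the `S¹` action on `U(2) × U(2)`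
`z ∗ (A, B) = (diag(z^a, 1)·A·diag(z^((a+c)/2), z^((a−c)/2))⁻¹,
               diag(z^b, 1)·B·diag(z^((b+d)/2), z^((b−d)/2))⁻¹)`
coincides with the orbit of the action
`z ∗ (A, B) = (D(z^a)·A·D(z^c)⁻¹, D(z^b)·B·D(z^d)⁻¹)`; in particular this orbit
is contained in `SU(2) × SU(2)`. -/
theorem orbits_coincide_on_SU2 (a b c d : ℤ)
    (h1 : Even (a + c)) (h2 : Even (a - c)) (h3 : Even (b + d)) (h4 : Even (b - d))
    (A B : Matrix (Fin 2) (Fin 2) ℂ)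
    (hA : A ∈ Matrix.specialUnitaryGroup (Fin 2) ℂ)
    (hB : B ∈ Matrix.specialUnitaryGroup (Fin 2) ℂ) :
    ({P : Matrix (Fin 2) (Fin 2) ℂ × Matrix (Fin 2) (Fin 2) ℂ | ∃ z : Circle,
        P = (Matrix.diagonal ![((z ^ a : Circle) : ℂ), 1] * A *
              (Matrix.diagonal ![((z ^ ((a + c) / 2) : Circle) : ℂ),
                ((z ^ ((a - c) / 2) : Circle) : ℂ)])⁻¹,
             Matrix.diagonal ![((z ^ b : Circle) : ℂ), 1] * B *
              (Matrix.diagonal ![((z ^ ((b + d) / 2) : Circle) : ℂ),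
                ((z ^ ((b - d) / 2) : Circle) : ℂ)])⁻¹)} =
      {P : Matrix (Fin 2) (Fin 2) ℂ × Matrix (Fin 2) (Fin 2) ℂ | ∃ z : Circle,
        P = (DMat (z ^ a) * A * (DMat (z ^ c))⁻¹, DMat (z ^ b) * B * (DMat (z ^ d))⁻¹)}) ∧
    (∀ P : Matrix (Fin 2) (Fin 2) ℂ × Matrix (Fin 2) (Fin 2) ℂ,
      (∃ z : Circle,
        P = (Matrix.diagonal ![((z ^ a : Circle) : ℂ), 1] * A *
              (Matrix.diagonal ![((z ^ ((a + c) / 2) : Circle) : ℂ),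
                ((z ^ ((a - c) / 2) : Circle) : ℂ)])⁻¹,
             Matrix.diagonal ![((z ^ b : Circle) : ℂ), 1] * B *
              (Matrix.diagonal ![((z ^ ((b + d) / 2) : Circle) : ℂ),
                ((z ^ ((b - d) / 2) : Circle) : ℂ)])⁻¹)) →
      P.1 ∈ Matrix.specialUnitaryGroup (Fin 2) ℂ ∧
        P.2 ∈ Matrix.specialUnitaryGroup (Fin 2) ℂ) :=
  orbits_coincide_on_SU2_general a b c d h1 h3 A B hA hB
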